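/- arXiv:2207.09772 — 14 statements merged into one kernel-verified Lean document; each statement's English description precedes it below -/
import Mathlib

section
/- If A = (μ_A, ν_A) is an intuitionistic fuzzy submodule of an R-module M, then its radical √A = (√μ_A, √ν_A), defined by √μ_A(r) = sup_{n∈ℕ} inf_{m∈M} μ_A(rⁿ·m) and √ν_A(r) = inf_{n∈ℕ} sup_{m∈M} ν_A(rⁿ·m), is an intuitionistic fuzzy ideal of R. -/
open scoped Classical

/-- An intuitionistic fuzzy submodule of an `R`-module `M`. -/
structure IFSub (R M : Type*) [CommRing R] [AddCommGroup M] [Module R M] where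
  mu : M → ℝ
  nu : M → ℝ
  mu_nonneg : ∀ x, 0 ≤ mu x
  nu_nonneg : ∀ x, 0 ≤ nu x
  mu_le_one : ∀ x, mu x ≤ 1
  nu_le_one : ∀ x, nu x ≤ 1
  sum_le_one : ∀ x, mu x + nu x ≤ 1
  mu_zero : mu 0 = 1
  nu_zero : nu 0 = 0
  mu_add : ∀ x y, min (mu x) (mu y) ≤ mu (x + y)
  nu_add : ∀ x y, nu (x + y) ≤ max (nu x) (nu y)
  mu_smul : ∀ (r : R) (x : M), mu x ≤ mu (r • x)
  nu_smul : ∀ (r : R) (x : M), nu (r • x) ≤ nu x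

/-- Predicate version: `(mu, nu)` is an intuitionistic fuzzy submodule. -/
def IsIFSub (R : Type*) {M : Type*} [CommRing R] [AddCommGroup M] [Module R M]
    (mu nu : M → ℝ) : Prop :=
  (∀ x, 0 ≤ mu x) ∧ (∀ x, 0 ≤ nu x) ∧ (∀ x, mu x ≤ 1) ∧ (∀ x, nu x ≤ 1) ∧
  (∀ x, mu x + nu x ≤ 1) ∧ mu 0 = 1 ∧ nu 0 = 0 ∧
  (∀ x y, min (mu x) (mu y) ≤ mu (x + y)) ∧
  (∀ x y, nu (x + y) ≤ max (nu x) (nu y)) ∧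
  (∀ (r : R) (x : M), mu x ≤ mu (r • x)) ∧
  (∀ (r : R) (x : M), nu (r • x) ≤ nu x)

/-- `(mu, nu)` is an intuitionistic fuzzy ideal of the ring `R`. -/
def IsIFIdeal {R : Type*} [CommRing R] (mu nu : R → ℝ) : Prop :=
  (∀ x y, min (mu x) (mu y) ≤ mu (x - y)) ∧
  (∀ x y, nu (x - y) ≤ max (nu x) (nu y)) ∧
  (∀ x y, max (mu x) (mu y) ≤ mu (x * y)) ∧
  (∀ x y, nu (x * y) ≤ min (nu x) (nu y))

/-- μ-part of the intuitionistic fuzzy radical of a fuzzy subset of a module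
(`n` ranges over the positive naturals). -/
noncomputable def radmu {R M : Type*} [CommRing R] [AddCommGroup M] [Module R M]
    (mu : M → ℝ) (r : R) : ℝ :=
  ⨆ n : ℕ, ⨅ m : M, mu (r ^ (n + 1) • m)

/-- ν-part of the intuitionistic fuzzy radical. -/
noncomputable def radnu {R M : Type*} [CommRing R] [AddCommGroup M] [Module R M]
    (nu : M → ℝ) (r : R) : ℝ :=
  ⨅ n : ℕ, ⨆ m : M, nu (r ^ (n + 1) • m)

/-- μ-part of the radical of a fuzzy subset of the ring `R`. -/
noncomputable def ringradmu {R : Type*} [CommRing R] (mu : R → ℝ) (r : R) : ℝ :=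
  ⨆ n : ℕ, mu (r ^ (n + 1))

/-- ν-part of the radical of a fuzzy subset of the ring `R`. -/
noncomputable def ringradnu {R : Type*} [CommRing R] (nu : R → ℝ) (r : R) : ℝ :=
  ⨅ n : ℕ, nu (r ^ (n + 1))

/-- μ-part of `Ā = (A : M)`. -/
noncomputable def barmu {R M : Type*} [CommRing R] [AddCommGroup M] [Module R M]
    (mu : M → ℝ) (r : R) : ℝ :=
  ⨅ m : M, mu (r • m)

/-- ν-part of `Ā = (A : M)`. -/
noncomputable def barnu {R M : Type*} [CommRing R] [AddCommGroup M] [Module R M]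
    (nu : M → ℝ) (r : R) : ℝ :=
  ⨆ m : M, nu (r • m)

/-- μ-part of the sum of two intuitionistic fuzzy subsets. -/
noncomputable def summu {M : Type*} [AddCommGroup M] (f g : M → ℝ) (x : M) : ℝ :=
  sSup {t : ℝ | ∃ y z : M, y + z = x ∧ t = min (f y) (g z)}

/-- ν-part of the sum of two intuitionistic fuzzy subsets. -/
noncomputable def sumnu {M : Type*} [AddCommGroup M] (f g : M → ℝ) (x : M) : ℝ :=
  sInf {t : ℝ | ∃ y z : M, y + z = x ∧ t = max (f y) (g z)}

/-- μ-part of the intuitionistic fuzzy characteristic function of a set. -/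
noncomputable def chimu {X : Type*} (s : Set X) (x : X) : ℝ :=
  if x ∈ s then 1 else 0

/-- ν-part of the intuitionistic fuzzy characteristic function of a set. -/
noncomputable def chinu {X : Type*} (s : Set X) (x : X) : ℝ :=
  if x ∈ s then 0 else 1

/-- The sup property: suprema of `mu` and infima of `nu` over nonempty subsets are attained. -/
def SupProp {X : Type*} (mu nu : X → ℝ) : Prop :=
  ∀ Y : Set X, Y.Nonempty →
    ∃ y₀ ∈ Y, (∀ y ∈ Y, mu y ≤ mu y₀) ∧ (∀ y ∈ Y, nu y₀ ≤ nu y)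

/-- `(mu, nu)` is an intuitionistic fuzzy primary submodule. -/
def IsIFPrimary (R : Type*) {M : Type*} [CommRing R] [AddCommGroup M] [Module R M]
    (mu nu : M → ℝ) : Prop :=
  ∀ (r : R) (m : M),
    (mu (r • m) = mu m ∧ nu (r • m) = nu m) ∨
    (mu (r • m) ≤ radmu mu r ∧ radnu nu r ≤ nu (r • m))

/-- μ-part of the image of a fuzzy subset under a map. -/
noncomputable def immu {M M' : Type*} (f : M → M') (mu : M → ℝ) (y : M') : ℝ :=
  sSup {t : ℝ | ∃ x : M, f x = y ∧ t = mu x}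

/-- ν-part of the image of a fuzzy subset under a map. -/
noncomputable def imnu {M M' : Type*} (f : M → M') (nu : M → ℝ) (y : M') : ℝ :=
  sInf {t : ℝ | ∃ x : M, f x = y ∧ t = nu x}

/-- An intuitionistic fuzzy ideal of `R` (structure version, with `mu 0 = 1`, `nu 0 = 0`). -/
structure IFIdealS (R : Type*) [CommRing R] where
  mu : R → ℝ
  nu : R → ℝ
  mu_nonneg : ∀ x, 0 ≤ mu x
  nu_nonneg : ∀ x, 0 ≤ nu x
  mu_le_one : ∀ x, mu x ≤ 1
  nu_le_one : ∀ x, nu x ≤ 1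
  sum_le_one : ∀ x, mu x + nu x ≤ 1
  mu_zero : mu 0 = 1
  nu_zero : nu 0 = 0
  mu_sub : ∀ x y, min (mu x) (mu y) ≤ mu (x - y)
  nu_sub : ∀ x y, nu (x - y) ≤ max (nu x) (nu y)
  mu_mul : ∀ x y, max (mu x) (mu y) ≤ mu (x * y)
  nu_mul : ∀ x y, nu (x * y) ≤ min (nu x) (nu y)

/-
The radical of `A` is the ring radical of the fuzzy ideal `(A : M)`, `r ↦ inf_m μ_A(r • m)`
(dually for `ν`). Replacing `ν` by `-ν` turns every `ν`-condition into the corresponding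
`μ`-condition, so only membership degrees need treatment. Every level cut `{x | c ≤ f x}` of a
fuzzy ideal `f` that contains `0` is an ideal, hence if it contains `x ^ (n + 1)` and
`y ^ (k + 1)` it contains `(x - y) ^ (n + k + 1)` by the binomial theorem; taking suprema over
`n` and `k` shows that the radical of `f` is again a fuzzy ideal.
-/

theorem Real.iSup_neg_eq_neg_iInf {ι : Sort*} (f : ι → ℝ) : ⨆ i, -f i = -⨅ i, f i := by
  rw [iSup, iInf, ← Real.sSup_neg, Set.neg_range]

structure IsFuzzyIdeal {R : Type*} [CommRing R] (f : R → ℝ) : Prop where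
  min_le_sub : ∀ x y, min (f x) (f y) ≤ f (x - y)
  max_le_mul : ∀ x y, max (f x) (f y) ≤ f (x * y)

theorem IsIFIdeal.of_isFuzzyIdeal {R : Type*} [CommRing R] {mu nu : R → ℝ}
    (hmu : IsFuzzyIdeal mu) (hnu : IsFuzzyIdeal (-nu)) : IsIFIdeal mu nu := by
  refine ⟨hmu.min_le_sub, fun x y => ?_, hmu.max_le_mul, fun x y => ?_⟩
  · simpa only [Pi.neg_apply, min_neg_neg, neg_le_neg_iff] using hnu.min_le_sub x y
  · simpa only [Pi.neg_apply, max_neg_neg, neg_le_neg_iff] using hnu.max_le_mul x y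

namespace IsFuzzyIdeal

variable {R : Type*} [CommRing R] {f : R → ℝ}

theorem le_map_zero (hf : IsFuzzyIdeal f) (x : R) : f x ≤ f 0 := by
  simpa using hf.min_le_sub x x

theorem le_of_dvd (hf : IsFuzzyIdeal f) {a b : R} (h : a ∣ b) : f a ≤ f b := by
  obtain ⟨c, rfl⟩ := h
  exact (le_max_left _ _).trans (hf.max_le_mul a c)

theorem min_le_add (hf : IsFuzzyIdeal f) (x y : R) : min (f x) (f y) ≤ f (x + y) := by
  simpa using (min_le_min_left _ (hf.le_of_dvd (neg_dvd.mpr dvd_rfl))).trans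
    (hf.min_le_sub x (-y))

def levelIdeal (hf : IsFuzzyIdeal f) (c : ℝ) (hc : c ≤ f 0) : Ideal R where
  carrier := {x | c ≤ f x}
  zero_mem' := hc
  add_mem' {x y} hx hy := (le_min hx hy).trans (hf.min_le_add x y)
  smul_mem' a x hx := hx.trans (hf.le_of_dvd (dvd_mul_left x a))

theorem mem_levelIdeal (hf : IsFuzzyIdeal f) {c : ℝ} (hc : c ≤ f 0) {x : R} :
    x ∈ hf.levelIdeal c hc ↔ c ≤ f x :=
  Iff.rfl

theorem min_le_sub_pow (hf : IsFuzzyIdeal f) (x y : R) (n k : ℕ) :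
    min (f (x ^ (n + 1))) (f (y ^ (k + 1))) ≤ f ((x - y) ^ (n + k + 1)) := by
  let I := hf.levelIdeal (min (f (x ^ (n + 1))) (f (y ^ (k + 1))))
    ((min_le_left _ _).trans (hf.le_map_zero (x ^ (n + 1))))
  have hx : x ^ (n + 1) ∈ I := (hf.mem_levelIdeal _).mpr (min_le_left _ _)
  have hy : (-y) ^ (k + 1) ∈ I := by
    rw [neg_pow]
    exact I.mul_mem_left _ ((hf.mem_levelIdeal _).mpr (min_le_right _ _))
  rw [sub_eq_add_neg]
  exact I.add_pow_mem_of_pow_mem_of_le hx hy (by omega)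

theorem bddAbove_range_comp (hf : IsFuzzyIdeal f) {ι : Sort*} (g : ι → R) :
    BddAbove (Set.range fun i => f (g i)) :=
  ⟨f 0, by rintro _ ⟨i, rfl⟩; exact hf.le_map_zero _⟩

theorem ringradmu (hf : IsFuzzyIdeal f) : IsFuzzyIdeal (ringradmu f) where
  min_le_sub x y := by
    refine le_of_forall_lt fun c hc => ?_
    obtain ⟨n, hn⟩ := exists_lt_of_lt_ciSup (lt_min_iff.mp hc).1
    obtain ⟨k, hk⟩ := exists_lt_of_lt_ciSup (lt_min_iff.mp hc).2
    calc c < min (f (x ^ (n + 1))) (f (y ^ (k + 1))) := lt_min hn hk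
      _ ≤ f ((x - y) ^ (n + k + 1)) := hf.min_le_sub_pow x y n k
      _ ≤ _root_.ringradmu f (x - y) :=
        le_ciSup (hf.bddAbove_range_comp fun j => (x - y) ^ (j + 1)) (n + k)
  max_le_mul x y :=
    max_le (ciSup_mono (hf.bddAbove_range_comp _) fun n =>
        hf.le_of_dvd (pow_dvd_pow_of_dvd (dvd_mul_right x y) _))
      (ciSup_mono (hf.bddAbove_range_comp _) fun n =>
        hf.le_of_dvd (pow_dvd_pow_of_dvd (dvd_mul_left y x) _))

end IsFuzzyIdeal

theorem neg_ringradnu {R : Type*} [CommRing R] (nu : R → ℝ) :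
    -ringradnu nu = ringradmu (-nu) := by
  ext r
  exact (Real.iSup_neg_eq_neg_iInf _).symm

section Module

variable {R M : Type*} [CommRing R] [AddCommGroup M] [Module R M]

theorem radmu_eq_ringradmu_barmu (mu : M → ℝ) :
    radmu (R := R) mu = ringradmu (barmu mu) :=
  rfl

theorem radnu_eq_ringradnu_barnu (nu : M → ℝ) :
    radnu (R := R) nu = ringradnu (barnu nu) :=
  rfl

theorem neg_barnu (nu : M → ℝ) : -barnu (R := R) nu = barmu (-nu) := by
  ext r
  change -(⨆ m, nu (r • m)) = ⨅ m, -nu (r • m)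
  rw [neg_eq_iff_eq_neg, ← Real.iSup_neg_eq_neg_iInf]
  simp only [neg_neg]

theorem barmu_le {mu : M → ℝ} (hb : BddBelow (Set.range mu)) (r : R) (m : M) :
    barmu mu r ≤ mu (r • m) :=
  ciInf_le (hb.mono (Set.range_comp_subset_range _ mu)) m

theorem isFuzzyIdeal_barmu {mu : M → ℝ} (hb : BddBelow (Set.range mu))
    (hadd : ∀ x y, min (mu x) (mu y) ≤ mu (x + y)) (hsmul : ∀ (r : R) x, mu x ≤ mu (r • x)) :
    IsFuzzyIdeal (barmu (R := R) mu) where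
  min_le_sub a b := le_ciInf fun m =>
    calc min (barmu mu a) (barmu mu b) ≤ min (mu (a • m)) (mu ((-1 : R) • b • m)) :=
          min_le_min (barmu_le hb a m) ((barmu_le hb b m).trans (hsmul _ _))
      _ ≤ mu (a • m + (-1 : R) • b • m) := hadd _ _
      _ = mu ((a - b) • m) := by rw [neg_one_smul, sub_smul, sub_eq_add_neg]
  max_le_mul a b := le_ciInf fun m => max_le
    (by simpa [mul_smul] using barmu_le hb a (b • m))
    (by simpa [mul_comm a b, mul_smul] using barmu_le hb b (a • m))

end Module

/-- the radical of an intuitionistic fuzzy submodule is an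
intuitionistic fuzzy ideal of `R`. -/
theorem stmt0 {R M : Type*} [CommRing R] [AddCommGroup M] [Module R M]
    (A : IFSub R M) :
    IsIFIdeal (radmu (R := R) A.mu) (radnu (R := R) A.nu) := by
  have hmu : IsFuzzyIdeal (barmu (R := R) A.mu) :=
    isFuzzyIdeal_barmu ⟨0, by rintro _ ⟨x, rfl⟩; exact A.mu_nonneg x⟩ A.mu_add A.mu_smul
  have hnu : IsFuzzyIdeal (barmu (R := R) (-A.nu)) := by
    refine isFuzzyIdeal_barmu ⟨-1, by rintro _ ⟨x, rfl⟩; simpa using A.nu_le_one x⟩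
      (fun x y => ?_) (fun r x => ?_)
    · simpa only [Pi.neg_apply, min_neg_neg, neg_le_neg_iff] using A.nu_add x y
    · simpa only [Pi.neg_apply, neg_le_neg_iff] using A.nu_smul r x
  refine IsIFIdeal.of_isFuzzyIdeal ?_ ?_
  · rw [radmu_eq_ringradmu_barmu]
    exact hmu.ringradmu
  · rw [radnu_eq_ringradnu_barnu, neg_ringradnu, neg_barnu]
    exact hnu.ringradmu
end

section
/- For any intuitionistic fuzzy submodule A of an R-module M, the radical of the radical equals the radical: √(√A) = √A, where the outer radical is taken in the ring R (i.e., √(√μ_A)(r) = sup_{n∈ℕ} √μ_A(rⁿ) and dually for ν). -/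
open scoped Classical

/-! The sequence `n ↦ ⨅ m, μ (rⁿ • m)` is monotone, because `r ^ (n + 1) • m = rⁿ • (r • m)`
ranges over a subset of the values of `m ↦ μ (rⁿ • m)`. Its supremum can therefore be computed
along any cofinal subsequence, in particular along the multiples of `k + 1`, which gives
`√μ (r ^ (k + 1)) = √μ r` for every `k`; the outer radical is then a supremum of a constant.
The `ν`-part is the order dual. -/

section Radical

variable {R M : Type*} [CommRing R] [AddCommGroup M] [Module R M]

lemma monotone_iInf_pow_smul {mu : M → ℝ} (hmu : BddBelow (Set.range mu)) (r : R) :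
    Monotone fun n : ℕ => ⨅ m : M, mu (r ^ n • m) := by
  refine monotone_nat_of_le_succ fun n => le_ciInf fun m => ?_
  rw [pow_succ, mul_smul]
  exact ciInf_le (hmu.mono (Set.range_comp_subset_range _ mu)) (r • m)

lemma antitone_iSup_pow_smul {nu : M → ℝ} (hnu : BddAbove (Set.range nu)) (r : R) :
    Antitone fun n : ℕ => ⨆ m : M, nu (r ^ n • m) := by
  refine antitone_nat_of_succ_le fun n => ciSup_le fun m => ?_
  rw [pow_succ, mul_smul]
  exact le_ciSup (hnu.mono (Set.range_comp_subset_range _ nu)) (r • m)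

lemma tendsto_mul_succ_atTop (k : ℕ) : Filter.Tendsto (fun n : ℕ => (k + 1) * (n + 1))
    Filter.atTop Filter.atTop :=
  Filter.tendsto_atTop_mono (fun _ => Nat.le_mul_of_pos_left _ k.succ_pos)
    (Filter.tendsto_add_atTop_nat 1)

lemma radmu_pow_succ {mu : M → ℝ} (hmu : BddBelow (Set.range mu)) (r : R) (k : ℕ) :
    radmu mu (r ^ (k + 1)) = radmu mu r := by
  have hF := monotone_iInf_pow_smul hmu r
  calc radmu mu (r ^ (k + 1)) = ⨆ n : ℕ, ⨅ m : M, mu (r ^ ((k + 1) * (n + 1)) • m) := by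
        simp only [radmu, ← pow_mul]
    _ = ⨆ n : ℕ, ⨅ m : M, mu (r ^ n • m) :=
        hF.ciSup_comp_tendsto_atTop_of_linearOrder (tendsto_mul_succ_atTop k)
    _ = radmu mu r :=
        (hF.ciSup_comp_tendsto_atTop_of_linearOrder (Filter.tendsto_add_atTop_nat 1)).symm

lemma radnu_pow_succ {nu : M → ℝ} (hnu : BddAbove (Set.range nu)) (r : R) (k : ℕ) :
    radnu nu (r ^ (k + 1)) = radnu nu r := by
  have hF := antitone_iSup_pow_smul hnu r
  calc radnu nu (r ^ (k + 1)) = ⨅ n : ℕ, ⨆ m : M, nu (r ^ ((k + 1) * (n + 1)) • m) := by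
        simp only [radnu, ← pow_mul]
    _ = ⨅ n : ℕ, ⨆ m : M, nu (r ^ n • m) :=
        hF.ciInf_comp_tendsto_atTop_of_linearOrder (tendsto_mul_succ_atTop k)
    _ = radnu nu r :=
        (hF.ciInf_comp_tendsto_atTop_of_linearOrder (Filter.tendsto_add_atTop_nat 1)).symm

lemma ringradmu_radmu {mu : M → ℝ} (hmu : BddBelow (Set.range mu)) (r : R) :
    ringradmu (radmu mu) r = radmu mu r := by
  simp only [ringradmu, radmu_pow_succ hmu, ciSup_const]

lemma ringradnu_radnu {nu : M → ℝ} (hnu : BddAbove (Set.range nu)) (r : R) :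
    ringradnu (radnu nu) r = radnu nu r := by
  simp only [ringradnu, radnu_pow_succ hnu, ciInf_const]

end Radical

/-- `√(√A) = √A`, the outer radical taken in the ring `R`. -/
theorem stmt1 {R M : Type*} [CommRing R] [AddCommGroup M] [Module R M]
    (A : IFSub R M) (r : R) :
    ringradmu (radmu A.mu) r = radmu A.mu r ∧
    ringradnu (radnu A.nu) r = radnu A.nu r :=
  ⟨ringradmu_radmu ⟨0, Set.forall_mem_range.2 A.mu_nonneg⟩ r,
    ringradnu_radnu ⟨1, Set.forall_mem_range.2 A.nu_le_one⟩ r⟩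
end

section
/- For intuitionistic fuzzy submodules A and B of an R-module M, √(A ∩ B) = √A ∩ √B, where intersection is given by (μ_A ∧ μ_B, ν_A ∨ ν_B). -/
open scoped Classical

private lemma ciInf_min_eq {ι : Type*} [Nonempty ι] (a b : ι → ℝ)
    (ha : BddBelow (Set.range a)) (hb : BddBelow (Set.range b)) :
    ⨅ i, min (a i) (b i) = min (⨅ i, a i) (⨅ i, b i) := by
  obtain ⟨c, hc⟩ := ha
  obtain ⟨d, hd⟩ := hb
  have hmin : BddBelow (Set.range fun i => min (a i) (b i)) :=
    ⟨min c d, by rintro x ⟨i, rfl⟩; exact min_le_min (hc ⟨i, rfl⟩) (hd ⟨i, rfl⟩)⟩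
  apply le_antisymm
  · refine le_min (le_ciInf fun i => ?_) (le_ciInf fun i => ?_)
    · exact (ciInf_le hmin i).trans (min_le_left _ _)
    · exact (ciInf_le hmin i).trans (min_le_right _ _)
  · exact le_ciInf fun i => min_le_min (ciInf_le ⟨c, hc⟩ i) (ciInf_le ⟨d, hd⟩ i)

private lemma ciSup_max_eq {ι : Type*} [Nonempty ι] (a b : ι → ℝ)
    (ha : BddAbove (Set.range a)) (hb : BddAbove (Set.range b)) :
    ⨆ i, max (a i) (b i) = max (⨆ i, a i) (⨆ i, b i) := by
  obtain ⟨c, hc⟩ := ha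
  obtain ⟨d, hd⟩ := hb
  have hmax : BddAbove (Set.range fun i => max (a i) (b i)) :=
    ⟨max c d, by rintro x ⟨i, rfl⟩; exact max_le_max (hc ⟨i, rfl⟩) (hd ⟨i, rfl⟩)⟩
  apply le_antisymm
  · exact ciSup_le fun i => max_le_max (le_ciSup ⟨c, hc⟩ i) (le_ciSup ⟨d, hd⟩ i)
  · refine max_le (ciSup_le fun i => ?_) (ciSup_le fun i => ?_)
    · exact (le_max_left _ _).trans (le_ciSup hmax i)
    · exact (le_max_right _ _).trans (le_ciSup hmax i)

private lemma ciSup_min_mono (f g : ℕ → ℝ) (hf : Monotone f) (hg : Monotone g)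
    (bf : BddAbove (Set.range f)) (bg : BddAbove (Set.range g)) :
    ⨆ n, min (f n) (g n) = min (⨆ n, f n) (⨆ n, g n) := by
  obtain ⟨c, hc⟩ := bf
  have bmin : BddAbove (Set.range fun n => min (f n) (g n)) :=
    ⟨c, by rintro x ⟨n, rfl⟩; exact (min_le_left _ _).trans (hc ⟨n, rfl⟩)⟩
  apply le_antisymm
  · exact ciSup_le fun n => min_le_min (le_ciSup ⟨c, hc⟩ n) (le_ciSup bg n)
  · by_contra h
    push_neg at h
    obtain ⟨n, hn⟩ := exists_lt_of_lt_ciSup (h.trans_le (min_le_left _ _))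
    obtain ⟨m, hm⟩ := exists_lt_of_lt_ciSup (h.trans_le (min_le_right _ _))
    have h1 : (⨆ k, min (f k) (g k)) < min (f (max n m)) (g (max n m)) :=
      lt_min (hn.trans_le (hf (le_max_left n m))) (hm.trans_le (hg (le_max_right n m)))
    exact absurd (le_ciSup bmin (max n m)) (not_le_of_gt h1)

private lemma ciInf_max_anti (f g : ℕ → ℝ) (hf : Antitone f) (hg : Antitone g)
    (bf : BddBelow (Set.range f)) (bg : BddBelow (Set.range g)) :
    ⨅ n, max (f n) (g n) = max (⨅ n, f n) (⨅ n, g n) := by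
  obtain ⟨c, hc⟩ := bf
  have bmax : BddBelow (Set.range fun n => max (f n) (g n)) :=
    ⟨c, by rintro x ⟨n, rfl⟩; exact (hc ⟨n, rfl⟩).trans (le_max_left _ _)⟩
  apply le_antisymm
  · by_contra h
    push_neg at h
    obtain ⟨n, hn⟩ := exists_lt_of_ciInf_lt ((le_max_left _ _).trans_lt h)
    obtain ⟨m, hm⟩ := exists_lt_of_ciInf_lt ((le_max_right _ _).trans_lt h)
    have h1 : max (f (max n m)) (g (max n m)) < ⨅ k, max (f k) (g k) :=
      max_lt ((hf (le_max_left n m)).trans_lt hn) ((hg (le_max_right n m)).trans_lt hm)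
    exact absurd (ciInf_le bmax (max n m)) (not_le_of_gt h1)
  · exact le_ciInf fun n => max_le_max (ciInf_le ⟨c, hc⟩ n) (ciInf_le bg n)

/-- `√(A ∩ B) = √A ∩ √B`. -/
theorem stmt3 {R M : Type*} [CommRing R] [AddCommGroup M] [Module R M]
    (A B : IFSub R M) (r : R) :
    radmu (fun x => min (A.mu x) (B.mu x)) r = min (radmu A.mu r) (radmu B.mu r) ∧
    radnu (fun x => max (A.nu x) (B.nu x)) r = max (radnu A.nu r) (radnu B.nu r) := by
  have key : ∀ (n : ℕ) (m : M), (r ^ (n + 1 + 1)) • m = (r ^ (n + 1)) • (r • m) := by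
    intro n m
    rw [pow_succ, mul_smul]
  -- bounds
  have bbA : ∀ n : ℕ, BddBelow (Set.range fun m : M => A.mu (r ^ (n + 1) • m)) :=
    fun n => ⟨0, by rintro x ⟨m, rfl⟩; exact A.mu_nonneg _⟩
  have bbB : ∀ n : ℕ, BddBelow (Set.range fun m : M => B.mu (r ^ (n + 1) • m)) :=
    fun n => ⟨0, by rintro x ⟨m, rfl⟩; exact B.mu_nonneg _⟩
  have baA : ∀ n : ℕ, BddAbove (Set.range fun m : M => A.nu (r ^ (n + 1) • m)) :=
    fun n => ⟨1, by rintro x ⟨m, rfl⟩; exact A.nu_le_one _⟩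
  have baB : ∀ n : ℕ, BddAbove (Set.range fun m : M => B.nu (r ^ (n + 1) • m)) :=
    fun n => ⟨1, by rintro x ⟨m, rfl⟩; exact B.nu_le_one _⟩
  set fA : ℕ → ℝ := fun n => ⨅ m : M, A.mu (r ^ (n + 1) • m) with hfA
  set fB : ℕ → ℝ := fun n => ⨅ m : M, B.mu (r ^ (n + 1) • m) with hfB
  set gA : ℕ → ℝ := fun n => ⨆ m : M, A.nu (r ^ (n + 1) • m) with hgA
  set gB : ℕ → ℝ := fun n => ⨆ m : M, B.nu (r ^ (n + 1) • m) with hgB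
  have monofA : Monotone fA := monotone_nat_of_le_succ fun n =>
    le_ciInf fun m => by rw [key n m]; exact ciInf_le (bbA n) (r • m)
  have monofB : Monotone fB := monotone_nat_of_le_succ fun n =>
    le_ciInf fun m => by rw [key n m]; exact ciInf_le (bbB n) (r • m)
  have antigA : Antitone gA := antitone_nat_of_succ_le fun n =>
    ciSup_le fun m => by rw [key n m]; exact le_ciSup (baA n) (r • m)
  have antigB : Antitone gB := antitone_nat_of_succ_le fun n =>
    ciSup_le fun m => by rw [key n m]; exact le_ciSup (baB n) (r • m)
  have bafA : BddAbove (Set.range fA) :=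
    ⟨1, by rintro x ⟨n, rfl⟩; exact (ciInf_le (bbA n) 0).trans (A.mu_le_one _)⟩
  have bafB : BddAbove (Set.range fB) :=
    ⟨1, by rintro x ⟨n, rfl⟩; exact (ciInf_le (bbB n) 0).trans (B.mu_le_one _)⟩
  have bbgA : BddBelow (Set.range gA) :=
    ⟨0, by rintro x ⟨n, rfl⟩; exact (A.nu_nonneg _).trans (le_ciSup (baA n) 0)⟩
  have bbgB : BddBelow (Set.range gB) :=
    ⟨0, by rintro x ⟨n, rfl⟩; exact (B.nu_nonneg _).trans (le_ciSup (baB n) 0)⟩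
  constructor
  · have h1 : ∀ n : ℕ, (⨅ m : M, min (A.mu (r ^ (n + 1) • m)) (B.mu (r ^ (n + 1) • m)))
        = min (fA n) (fB n) := fun n =>
      ciInf_min_eq (fun m => A.mu (r ^ (n + 1) • m)) (fun m => B.mu (r ^ (n + 1) • m))
        (bbA n) (bbB n)
    calc radmu (fun x => min (A.mu x) (B.mu x)) r
        = ⨆ n : ℕ, min (fA n) (fB n) := by
          unfold radmu; exact iSup_congr h1
      _ = min (⨆ n, fA n) (⨆ n, fB n) := ciSup_min_mono fA fB monofA monofB bafA bafB
      _ = min (radmu A.mu r) (radmu B.mu r) := rfl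
  · have h1 : ∀ n : ℕ, (⨆ m : M, max (A.nu (r ^ (n + 1) • m)) (B.nu (r ^ (n + 1) • m)))
        = max (gA n) (gB n) := fun n =>
      ciSup_max_eq (fun m => A.nu (r ^ (n + 1) • m)) (fun m => B.nu (r ^ (n + 1) • m))
        (baA n) (baB n)
    calc radnu (fun x => max (A.nu x) (B.nu x)) r
        = ⨅ n : ℕ, max (gA n) (gB n) := by
          unfold radnu; exact iInf_congr h1
      _ = max (⨅ n, gA n) (⨅ n, gB n) := ciInf_max_anti gA gB antigA antigB bbgA bbgB
      _ = max (radnu A.nu r) (radnu B.nu r) := rfl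
end

section
/- For intuitionistic fuzzy submodules A and B of an R-module M, √(√A + √B) ⊆ √(A + B), where the sum of intuitionistic fuzzy subsets is (μ_A + μ_B)(x) = sup{μ_A(y) ∧ μ_B(z) : y + z = x} and (ν_A + ν_B)(x) = inf{ν_A(y) ∨ ν_B(z) : y + z = x}. -/
open scoped Classical

section Stmt4Aux

variable {R M : Type*} [CommRing R] [AddCommGroup M] [Module R M]

lemma key_alg (r y z : R) (n p q : ℕ) (h : y + z = r ^ (n + 1)) :
    ∃ (N : ℕ) (c d : R), c * y ^ (p + 1) + d * z ^ (q + 1) = r ^ (N + 1) := by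
  set I := Ideal.span ({y ^ (p + 1), z ^ (q + 1)} : Set R) with hI
  have hy : y ∈ I.radical :=
    Ideal.mem_radical_of_pow_mem (m := p + 1)
      (Ideal.le_radical (Ideal.subset_span (by simp)))
  have hz : z ∈ I.radical :=
    Ideal.mem_radical_of_pow_mem (m := q + 1)
      (Ideal.le_radical (Ideal.subset_span (by simp)))
  have hr : r ∈ I.radical :=
    Ideal.mem_radical_of_pow_mem (m := n + 1) (h ▸ I.radical.add_mem hy hz)
  obtain ⟨k, hk⟩ := hr
  have hk1 : r ^ (k + 1) ∈ I := by
    rw [pow_succ]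
    exact I.mul_mem_right r hk
  obtain ⟨c, d, hcd⟩ := Ideal.mem_span_pair.mp hk1
  exact ⟨k, c, d, hcd⟩

lemma min_ciSup_le {ι κ : Type*} [Nonempty ι] [Nonempty κ] {a : ι → ℝ} {b : κ → ℝ} {T : ℝ}
    (h : ∀ i j, min (a i) (b j) ≤ T) : min (⨆ i, a i) (⨆ j, b j) ≤ T := by
  by_contra hc
  push_neg at hc
  obtain ⟨i, hi⟩ := exists_lt_of_lt_ciSup (lt_of_lt_of_le hc (min_le_left _ _))
  obtain ⟨j, hj⟩ := exists_lt_of_lt_ciSup (lt_of_lt_of_le hc (min_le_right _ _))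
  exact absurd (h i j) (not_le.mpr (lt_min hi hj))

lemma le_max_ciInf {ι κ : Type*} [Nonempty ι] [Nonempty κ] {a : ι → ℝ} {b : κ → ℝ} {T : ℝ}
    (h : ∀ i j, T ≤ max (a i) (b j)) : T ≤ max (⨅ i, a i) (⨅ j, b j) := by
  by_contra hc
  push_neg at hc
  obtain ⟨i, hi⟩ := exists_lt_of_ciInf_lt (lt_of_le_of_lt (le_max_left _ _) hc)
  obtain ⟨j, hj⟩ := exists_lt_of_ciInf_lt (lt_of_le_of_lt (le_max_right _ _) hc)
  exact absurd (h i j) (not_le.mpr (max_lt hi hj))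

lemma summu_bddAbove {f g : M → ℝ} (hf : ∀ x, f x ≤ 1) (hg : ∀ x, g x ≤ 1) (x : M) :
    BddAbove {t : ℝ | ∃ y z : M, y + z = x ∧ t = min (f y) (g z)} := by
  refine ⟨1, ?_⟩
  rintro t ⟨a, b, -, rfl⟩
  exact le_trans (min_le_left _ _) (hf a)

lemma le_summu {f g : M → ℝ} (hf : ∀ x, f x ≤ 1) (hg : ∀ x, g x ≤ 1) {y z x : M}
    (h : y + z = x) : min (f y) (g z) ≤ summu f g x :=
  le_csSup (summu_bddAbove hf hg x) ⟨y, z, h, rfl⟩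

lemma summu_nonneg {f g : M → ℝ} (hf0 : ∀ x, 0 ≤ f x) (hg0 : ∀ x, 0 ≤ g x)
    (hf : ∀ x, f x ≤ 1) (hg : ∀ x, g x ≤ 1) (x : M) : 0 ≤ summu f g x :=
  le_trans (le_min (hf0 x) (hg0 0)) (le_summu hf hg (add_zero x))

lemma summu_le_one {f g : M → ℝ} (hf : ∀ x, f x ≤ 1) (hg : ∀ x, g x ≤ 1) (x : M) :
    summu f g x ≤ 1 := by
  apply Real.sSup_le _ zero_le_one
  rintro t ⟨a, b, -, rfl⟩
  exact le_trans (min_le_left _ _) (hf a)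

lemma sumnu_bddBelow {f g : M → ℝ} (hf0 : ∀ x, 0 ≤ f x) (hg0 : ∀ x, 0 ≤ g x) (x : M) :
    BddBelow {t : ℝ | ∃ y z : M, y + z = x ∧ t = max (f y) (g z)} := by
  refine ⟨0, ?_⟩
  rintro t ⟨a, b, -, rfl⟩
  exact le_trans (hf0 a) (le_max_left _ _)

lemma sumnu_le {f g : M → ℝ} (hf0 : ∀ x, 0 ≤ f x) (hg0 : ∀ x, 0 ≤ g x) {y z x : M}
    (h : y + z = x) : sumnu f g x ≤ max (f y) (g z) :=
  csInf_le (sumnu_bddBelow hf0 hg0 x) ⟨y, z, h, rfl⟩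

lemma sumnu_nonneg {f g : M → ℝ} (hf0 : ∀ x, 0 ≤ f x) (hg0 : ∀ x, 0 ≤ g x) (x : M) :
    0 ≤ sumnu f g x := by
  apply le_csInf
  · exact ⟨max (f x) (g 0), ⟨x, 0, add_zero x, rfl⟩⟩
  · rintro t ⟨a, b, -, rfl⟩
    exact le_trans (hf0 a) (le_max_left _ _)

lemma sumnu_le_one {f g : M → ℝ} (hf0 : ∀ x, 0 ≤ f x) (hg0 : ∀ x, 0 ≤ g x)
    (hf : ∀ x, f x ≤ 1) (hg : ∀ x, g x ≤ 1) (x : M) : sumnu f g x ≤ 1 :=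
  le_trans (sumnu_le hf0 hg0 (add_zero x)) (max_le (hf x) (hg 0))

end Stmt4Aux

/-- `√(√A + √B) ⊆ √(A + B)`. -/
theorem stmt4 {R M : Type*} [CommRing R] [AddCommGroup M] [Module R M]
    (A B : IFSub R M) (r : R) :
    ringradmu (summu (radmu A.mu) (radmu B.mu)) r ≤ radmu (summu A.mu B.mu) r ∧
    radnu (sumnu A.nu B.nu) r ≤ ringradnu (sumnu (radnu A.nu) (radnu B.nu)) r := by
  have hmuA0 := A.mu_nonneg
  have hmuB0 := B.mu_nonneg
  have hmuA1 := A.mu_le_one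
  have hmuB1 := B.mu_le_one
  have hnuA0 := A.nu_nonneg
  have hnuB0 := B.nu_nonneg
  have hnuA1 := A.nu_le_one
  have hnuB1 := B.nu_le_one
  -- boundedness facts for the target μ-radical
  have hTbdd : BddAbove (Set.range fun N : ℕ => ⨅ m : M, summu A.mu B.mu (r ^ (N + 1) • m)) := by
    refine ⟨1, ?_⟩
    rintro t ⟨N, rfl⟩
    exact le_trans (ciInf_le ⟨0, by rintro t ⟨m, rfl⟩; exact summu_nonneg hmuA0 hmuB0 hmuA1 hmuB1 _⟩ 0)
      (summu_le_one hmuA1 hmuB1 _)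
  have hT0 : 0 ≤ radmu (summu A.mu B.mu) r := by
    refine le_trans ?_ (le_ciSup hTbdd 0)
    exact le_ciInf fun m => summu_nonneg hmuA0 hmuB0 hmuA1 hmuB1 _
  -- boundedness facts for the source ν-radical
  have hSbdd : BddBelow (Set.range fun N : ℕ => ⨆ m : M, sumnu A.nu B.nu (r ^ (N + 1) • m)) := by
    refine ⟨0, ?_⟩
    rintro t ⟨N, rfl⟩
    refine le_trans (sumnu_nonneg hnuA0 hnuB0 (r ^ (N + 1) • (0 : M))) ?_
    exact le_ciSup (f := fun m : M => sumnu A.nu B.nu (r ^ (N + 1) • m))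
      ⟨1, by rintro t ⟨m, rfl⟩; exact sumnu_le_one hnuA0 hnuB0 hnuA1 hnuB1 _⟩ (0 : M)
  constructor
  · -- μ part
    apply ciSup_le
    intro n
    apply Real.sSup_le _ hT0
    rintro t ⟨y, z, hyz, rfl⟩
    unfold radmu
    apply min_ciSup_le
    intro p q
    obtain ⟨N, c, d, hcd⟩ := key_alg r y z n p q hyz
    refine le_trans ?_ (le_ciSup hTbdd N)
    apply le_ciInf
    intro m
    have key : r ^ (N + 1) • m = y ^ (p + 1) • (c • m) + z ^ (q + 1) • (d • m) := by
      rw [smul_smul, smul_smul, ← add_smul, mul_comm (y ^ (p + 1)) c,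
        mul_comm (z ^ (q + 1)) d, hcd]
    rw [key]
    refine le_trans ?_ (le_summu hmuA1 hmuB1 rfl)
    exact min_le_min
      (ciInf_le ⟨0, by rintro t ⟨m', rfl⟩; exact hmuA0 _⟩ (c • m))
      (ciInf_le ⟨0, by rintro t ⟨m', rfl⟩; exact hmuB0 _⟩ (d • m))
  · -- ν part
    apply le_ciInf
    intro n
    apply le_csInf
    · exact ⟨max (radnu A.nu (r ^ (n + 1))) (radnu B.nu (0 : R)), ⟨r ^ (n + 1), 0, add_zero _, rfl⟩⟩
    rintro t ⟨y, z, hyz, rfl⟩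
    unfold radnu
    apply le_max_ciInf
    intro p q
    obtain ⟨N, c, d, hcd⟩ := key_alg r y z n p q hyz
    refine le_trans (ciInf_le hSbdd N) ?_
    apply ciSup_le
    intro m
    have key : r ^ (N + 1) • m = y ^ (p + 1) • (c • m) + z ^ (q + 1) • (d • m) := by
      rw [smul_smul, smul_smul, ← add_smul, mul_comm (y ^ (p + 1)) c,
        mul_comm (z ^ (q + 1)) d, hcd]
    rw [key]
    refine le_trans (sumnu_le hnuA0 hnuB0 rfl) ?_
    exact max_le_max
      (le_ciSup (f := fun m' : M => A.nu (y ^ (p + 1) • m'))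
        ⟨1, by rintro t ⟨m', rfl⟩; exact hnuA1 _⟩ (c • m))
      (le_ciSup (f := fun m' : M => B.nu (z ^ (q + 1) • m'))
        ⟨1, by rintro t ⟨m', rfl⟩; exact hnuB1 _⟩ (d • m))
end

section
/- Let A be an intuitionistic fuzzy submodule of an R-module M with the sup property. For α, β ∈ [0,1] with α+β ≤ 1, the (α,β)-cut of the radical equals the radical of the (α,β)-cut: (√A)^{(α,β)} = √(M_A^{(α,β)}), where M_A^{(α,β)} = {x ∈ M : μ_A(x) ≥ α, ν_A(x) ≤ β} and (√A)^{(α,β)} = {r ∈ R : √μ_A(r) ≥ α, √ν_A(r) ≤ β}. -/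
open scoped Classical

/-- with the sup property, `(√A)^{(α,β)} = √(M_A^{(α,β)})`. -/
theorem stmt6 {R M : Type*} [CommRing R] [AddCommGroup M] [Module R M]
    (A : IFSub R M) (hsup : SupProp A.mu A.nu)
    (α β : ℝ) (hα : 0 ≤ α) (hβ : 0 ≤ β) (hαβ : α + β ≤ 1) :
    {r : R | α ≤ radmu A.mu r ∧ radnu A.nu r ≤ β} =
      {r : R | ∃ n : ℕ, ∀ m : M,
        α ≤ A.mu (r ^ (n + 1) • m) ∧ A.nu (r ^ (n + 1) • m) ≤ β} := by
  ext r
  simp only [Set.mem_setOf_eq]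
  have hbb : ∀ n : ℕ, BddBelow (Set.range fun m : M => A.mu (r ^ (n+1) • m)) :=
    fun n => ⟨0, by rintro x ⟨m, rfl⟩; exact A.mu_nonneg _⟩
  have hba : ∀ n : ℕ, BddAbove (Set.range fun m : M => A.nu (r ^ (n+1) • m)) :=
    fun n => ⟨1, by rintro x ⟨m, rfl⟩; exact A.nu_le_one _⟩
  constructor
  · rintro ⟨h1, h2⟩
    have hmu : ∃ n : ℕ, ∀ m : M, α ≤ A.mu (r ^ (n + 1) • m) := by
      by_contra hc
      push_neg at hc
      set Y : Set M := {x | (∃ n : ℕ, ∃ m : M, x = r ^ (n+1) • m) ∧ A.mu x < α} with hY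
      obtain ⟨m0, hm0⟩ := hc 0
      have hYne : Y.Nonempty := ⟨r ^ (0+1) • m0, ⟨0, m0, rfl⟩, hm0⟩
      obtain ⟨y₀, hy₀Y, hy₀mu, -⟩ := hsup Y hYne
      have hle : radmu A.mu r ≤ A.mu y₀ := by
        apply ciSup_le
        intro n
        obtain ⟨m, hm⟩ := hc n
        calc (⨅ m : M, A.mu (r ^ (n+1) • m)) ≤ A.mu (r ^ (n+1) • m) := ciInf_le (hbb n) m
          _ ≤ A.mu y₀ := hy₀mu _ ⟨⟨n, m, rfl⟩, hm⟩
      exact absurd (h1.trans hle) (not_le.mpr hy₀Y.2)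
    have hnu : ∃ n : ℕ, ∀ m : M, A.nu (r ^ (n + 1) • m) ≤ β := by
      by_contra hc
      push_neg at hc
      set Y : Set M := {x | (∃ n : ℕ, ∃ m : M, x = r ^ (n+1) • m) ∧ β < A.nu x} with hY
      obtain ⟨m0, hm0⟩ := hc 0
      have hYne : Y.Nonempty := ⟨r ^ (0+1) • m0, ⟨0, m0, rfl⟩, hm0⟩
      obtain ⟨y₀, hy₀Y, -, hy₀nu⟩ := hsup Y hYne
      have hle : A.nu y₀ ≤ radnu A.nu r := by
        apply le_ciInf
        intro n
        obtain ⟨m, hm⟩ := hc n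
        calc A.nu y₀ ≤ A.nu (r ^ (n+1) • m) := hy₀nu _ ⟨⟨n, m, rfl⟩, hm⟩
          _ ≤ ⨆ m : M, A.nu (r ^ (n+1) • m) := le_ciSup (hba n) m
      exact absurd (hle.trans h2) (not_le.mpr hy₀Y.2)
    obtain ⟨n₁, hn₁⟩ := hmu
    obtain ⟨n₂, hn₂⟩ := hnu
    refine ⟨max n₁ n₂, fun m => ?_⟩
    have key : ∀ N k : ℕ, k ≤ N →
        r ^ (N + 1) • m = r ^ (N - k) • (r ^ (k+1) • m) := by
      intro N k hk
      have h : N - k + (k + 1) = N + 1 := by omega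
      rw [← mul_smul, ← pow_add, h]
    constructor
    · rw [key _ n₁ (le_max_left _ _)]
      exact (hn₁ m).trans (A.mu_smul _ _)
    · rw [key _ n₂ (le_max_right _ _)]
      exact (A.nu_smul _ _).trans (hn₂ m)
  · rintro ⟨n, hn⟩
    constructor
    · have hbdd : BddAbove (Set.range fun n : ℕ => ⨅ m : M, A.mu (r ^ (n+1) • m)) :=
        ⟨1, by rintro x ⟨k, rfl⟩; exact ciInf_le_of_le (hbb k) 0 (A.mu_le_one _)⟩
      exact le_ciSup_of_le hbdd n (le_ciInf fun m => (hn m).1)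
    · have hbdd : BddBelow (Set.range fun n : ℕ => ⨆ m : M, A.nu (r ^ (n+1) • m)) :=
        ⟨0, by rintro x ⟨k, rfl⟩; exact le_ciSup_of_le (hba k) 0 (A.nu_nonneg _)⟩
      exact ciInf_le_of_le hbdd n (ciSup_le fun m => (hn m).2)
end

section
/- If A is an intuitionistic fuzzy submodule of an R-module M, then Ā = (μ_Ā, ν_Ā) defined by μ_Ā(r) = inf_{m∈M} μ_A(r·m) and ν_Ā(r) = sup_{m∈M} ν_A(r·m) is an intuitionistic fuzzy ideal of R. -/
open scoped Classical

/-- `Ā` is an intuitionistic fuzzy ideal of `R`. -/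
theorem stmt7 {R M : Type*} [CommRing R] [AddCommGroup M] [Module R M]
    (A : IFSub R M) :
    IsIFIdeal (barmu (R := R) A.mu) (barnu (R := R) A.nu) := by
  have hbb : ∀ r : R, BddBelow (Set.range fun m : M => A.mu (r • m)) :=
    fun r => ⟨0, by rintro t ⟨m, rfl⟩; exact A.mu_nonneg _⟩
  have hba : ∀ r : R, BddAbove (Set.range fun m : M => A.nu (r • m)) :=
    fun r => ⟨1, by rintro t ⟨m, rfl⟩; exact A.nu_le_one _⟩
  have hmu_sub : ∀ x y : M, min (A.mu x) (A.mu y) ≤ A.mu (x - y) := by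
    intro x y
    have h1 : A.mu y ≤ A.mu (-y) := by
      have := A.mu_smul (-1 : R) y; simpa using this
    calc min (A.mu x) (A.mu y) ≤ min (A.mu x) (A.mu (-y)) :=
          min_le_min le_rfl h1
      _ ≤ A.mu (x + -y) := A.mu_add x (-y)
      _ = A.mu (x - y) := by rw [sub_eq_add_neg]
  have hnu_sub : ∀ x y : M, A.nu (x - y) ≤ max (A.nu x) (A.nu y) := by
    intro x y
    have h1 : A.nu (-y) ≤ A.nu y := by
      have := A.nu_smul (-1 : R) y; simpa using this
    calc A.nu (x - y) = A.nu (x + -y) := by rw [sub_eq_add_neg]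
      _ ≤ max (A.nu x) (A.nu (-y)) := A.nu_add x (-y)
      _ ≤ max (A.nu x) (A.nu y) := max_le_max le_rfl h1
  refine ⟨?_, ?_, ?_, ?_⟩
  · intro x y
    apply le_ciInf
    intro m
    have hx : barmu (R := R) A.mu x ≤ A.mu (x • m) := ciInf_le (hbb x) m
    have hy : barmu (R := R) A.mu y ≤ A.mu (y • m) := ciInf_le (hbb y) m
    have : min (A.mu (x • m)) (A.mu (y • m)) ≤ A.mu ((x - y) • m) := by
      have := hmu_sub (x • m) (y • m)
      simpa [sub_smul] using this
    exact le_trans (min_le_min hx hy) this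
  · intro x y
    apply ciSup_le
    intro m
    have hx : A.nu (x • m) ≤ barnu (R := R) A.nu x := le_ciSup (hba x) m
    have hy : A.nu (y • m) ≤ barnu (R := R) A.nu y := le_ciSup (hba y) m
    have : A.nu ((x - y) • m) ≤ max (A.nu (x • m)) (A.nu (y • m)) := by
      have := hnu_sub (x • m) (y • m)
      simpa [sub_smul] using this
    exact le_trans this (max_le_max hx hy)
  · intro x y
    apply le_ciInf
    intro m
    apply max_le
    · have h1 : barmu (R := R) A.mu x ≤ A.mu (x • (y • m)) := ciInf_le (hbb x) (y • m)
      calc barmu (R := R) A.mu x ≤ A.mu (x • (y • m)) := h1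
        _ = A.mu ((x * y) • m) := by rw [mul_smul]
    · have h1 : barmu (R := R) A.mu y ≤ A.mu (y • (x • m)) := ciInf_le (hbb y) (x • m)
      calc barmu (R := R) A.mu y ≤ A.mu (y • (x • m)) := h1
        _ = A.mu ((x * y) • m) := by rw [← mul_smul, mul_comm]
  · intro x y
    apply ciSup_le
    intro m
    apply le_min
    · calc A.nu ((x * y) • m) = A.nu (x • (y • m)) := by rw [mul_smul]
        _ ≤ barnu (R := R) A.nu x := le_ciSup (hba x) (y • m)
    · calc A.nu ((x * y) • m) = A.nu (y • (x • m)) := by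
            rw [← mul_smul, mul_comm]
        _ ≤ barnu (R := R) A.nu y := le_ciSup (hba y) (x • m)
end

section
/- Let A be an intuitionistic fuzzy submodule of an R-module M and α, β ∈ [0,1] with α+β ≤ 1. Then the (α,β)-cut of Ā equals the residual ideal of the cut of A: {r ∈ R : μ_Ā(r) ≥ α, ν_Ā(r) ≤ β} = (M_A^{(α,β)} : M) = {r ∈ R : r·M ⊆ M_A^{(α,β)}}, where M_A^{(α,β)} = {x ∈ M : μ_A(x) ≥ α, ν_A(x) ≤ β}. -/
open scoped Classical

/-- `M_Ā^{(α,β)} = (M_A^{(α,β)} : M)`. -/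
theorem stmt9 {R M : Type*} [CommRing R] [AddCommGroup M] [Module R M]
    (A : IFSub R M) (α β : ℝ) (hα : 0 ≤ α) (hβ : 0 ≤ β) (hαβ : α + β ≤ 1) :
    {r : R | α ≤ barmu A.mu r ∧ barnu A.nu r ≤ β} =
      {r : R | ∀ m : M, α ≤ A.mu (r • m) ∧ A.nu (r • m) ≤ β} := by
  ext r
  have hbb : BddBelow (Set.range fun m : M => A.mu (r • m)) :=
    ⟨0, by rintro _ ⟨m, rfl⟩; exact A.mu_nonneg _⟩
  have hba : BddAbove (Set.range fun m : M => A.nu (r • m)) :=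
    ⟨1, by rintro _ ⟨m, rfl⟩; exact A.nu_le_one _⟩
  simp only [Set.mem_setOf_eq]
  constructor
  · rintro ⟨h1, h2⟩ m
    exact ⟨h1.trans (ciInf_le hbb m), (le_ciSup hba m).trans h2⟩
  · intro h
    exact ⟨le_ciInf fun m => (h m).1, ciSup_le fun m => (h m).2⟩
end

section
/- Let f : M → M' be a surjective R-module homomorphism and A an intuitionistic fuzzy submodule of M. Then the image f(A), defined by f(μ_A)(y) = sup{μ_A(x) : f(x) = y} and ν_A(f)(y) = inf{ν_A(x) : f(x) = y}, is an intuitionistic fuzzy submodule of M', and moreover Ā ⊆ \overline{f(A)}, i.e., inf_{m∈M} μ_A(r·m) ≤ inf_{m'∈M'} f(μ_A)(r·m') and sup_{m∈M} ν_A(r·m) ≥ sup_{m'∈M'} ν_A(f)(r·m') for all r ∈ R. -/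
open scoped Classical

/-- for an epimorphism `f`, `f(A)` is an intuitionistic fuzzy
submodule of `M'` and `Ā ⊆ \overline{f(A)}`. -/
theorem stmt10 {R M M' : Type*} [CommRing R] [AddCommGroup M] [Module R M]
    [AddCommGroup M'] [Module R M']
    (f : M →ₗ[R] M') (hf : Function.Surjective f) (A : IFSub R M) :
    IsIFSub R (immu f A.mu) (imnu f A.nu) ∧
    ∀ r : R, barmu A.mu r ≤ barmu (immu f A.mu) r ∧
      barnu (imnu f A.nu) r ≤ barnu A.nu r := by
  classical
  have hSne : ∀ y : M', {t : ℝ | ∃ x : M, f x = y ∧ t = A.mu x}.Nonempty := by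
    intro y; obtain ⟨x, hx⟩ := hf y; exact ⟨A.mu x, x, hx, rfl⟩
  have hTne : ∀ y : M', {t : ℝ | ∃ x : M, f x = y ∧ t = A.nu x}.Nonempty := by
    intro y; obtain ⟨x, hx⟩ := hf y; exact ⟨A.nu x, x, hx, rfl⟩
  have hSbdd : ∀ y : M', BddAbove {t : ℝ | ∃ x : M, f x = y ∧ t = A.mu x} := by
    intro y; exact ⟨1, fun t ⟨x, _, ht⟩ => ht ▸ A.mu_le_one x⟩
  have hTbdd : ∀ y : M', BddBelow {t : ℝ | ∃ x : M, f x = y ∧ t = A.nu x} := by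
    intro y; exact ⟨0, fun t ⟨x, _, ht⟩ => ht ▸ A.nu_nonneg x⟩
  -- key facts
  have keymu : ∀ x : M, A.mu x ≤ immu f A.mu (f x) := fun x =>
    le_csSup (hSbdd _) ⟨x, rfl, rfl⟩
  have keynu : ∀ x : M, imnu f A.nu (f x) ≤ A.nu x := fun x =>
    csInf_le (hTbdd _) ⟨x, rfl, rfl⟩
  have hmu_le_one : ∀ y, immu f A.mu y ≤ 1 := fun y =>
    csSup_le (hSne y) fun t ⟨x, _, ht⟩ => ht ▸ A.mu_le_one x
  have hnu_nonneg : ∀ y, 0 ≤ imnu f A.nu y := fun y =>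
    le_csInf (hTne y) fun t ⟨x, _, ht⟩ => ht ▸ A.nu_nonneg x
  have hmu_nonneg : ∀ y, 0 ≤ immu f A.mu y := by
    intro y
    obtain ⟨t, x, hx, ht⟩ := hSne y
    exact le_trans (ht ▸ A.mu_nonneg x) (le_csSup (hSbdd y) ⟨x, hx, ht⟩)
  have hnu_le_one : ∀ y, imnu f A.nu y ≤ 1 := by
    intro y
    obtain ⟨t, x, hx, ht⟩ := hTne y
    exact le_trans (csInf_le (hTbdd y) ⟨x, hx, ht⟩) (ht ▸ A.nu_le_one x)
  constructor
  · refine ⟨hmu_nonneg, hnu_nonneg, hmu_le_one, hnu_le_one, ?_, ?_, ?_, ?_, ?_, ?_, ?_⟩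
    · -- sum ≤ 1
      intro y
      have : immu f A.mu y ≤ 1 - imnu f A.nu y := by
        apply csSup_le (hSne y)
        rintro t ⟨x, hx, rfl⟩
        have h1 := A.sum_le_one x
        have h2 : imnu f A.nu y ≤ A.nu x := hx ▸ keynu x
        linarith
      linarith
    · -- mu 0 = 1
      refine le_antisymm (hmu_le_one 0) ?_
      have := keymu (0 : M)
      rw [map_zero, A.mu_zero] at this
      exact this
    · -- nu 0 = 0
      refine le_antisymm ?_ (hnu_nonneg 0)
      have := keynu (0 : M)
      rw [map_zero, A.nu_zero] at this
      exact this
    · -- mu add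
      intro y z
      apply le_of_forall_lt
      intro c hc
      obtain ⟨t, ⟨x, hx, rfl⟩, hct⟩ :=
        exists_lt_of_lt_csSup (hSne y) (lt_of_lt_of_le hc (min_le_left _ _))
      obtain ⟨s, ⟨x', hx', rfl⟩, hcs⟩ :=
        exists_lt_of_lt_csSup (hSne z) (lt_of_lt_of_le hc (min_le_right _ _))
      have h1 : c < A.mu (x + x') :=
        lt_of_lt_of_le (lt_min hct hcs) (A.mu_add x x')
      have h2 : A.mu (x + x') ≤ immu f A.mu (y + z) := by
        have := keymu (x + x')
        rwa [map_add, hx, hx'] at this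
      exact lt_of_lt_of_le h1 h2
    · -- nu add
      intro y z
      by_contra h
      push_neg at h
      set c := (max (imnu f A.nu y) (imnu f A.nu z) + imnu f A.nu (y + z)) / 2 with hc
      have hc1 : max (imnu f A.nu y) (imnu f A.nu z) < c := by
        simp only [hc]; linarith
      have hc2 : c < imnu f A.nu (y + z) := by
        simp only [hc]; linarith
      obtain ⟨t, ⟨x, hx, rfl⟩, hct⟩ :=
        exists_lt_of_csInf_lt (hTne y) (lt_of_le_of_lt (le_max_left _ _) hc1)
      obtain ⟨s, ⟨x', hx', rfl⟩, hcs⟩ :=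
        exists_lt_of_csInf_lt (hTne z) (lt_of_le_of_lt (le_max_right _ _) hc1)
      have h1 : A.nu (x + x') < c :=
        lt_of_le_of_lt (A.nu_add x x') (max_lt hct hcs)
      have h2 : imnu f A.nu (y + z) ≤ A.nu (x + x') := by
        have := keynu (x + x')
        rwa [map_add, hx, hx'] at this
      linarith
    · -- mu smul
      intro r y
      apply csSup_le (hSne y)
      rintro t ⟨x, hx, rfl⟩
      refine le_trans (A.mu_smul r x) ?_
      have := keymu (r • x)
      rwa [map_smul, hx] at this
    · -- nu smul
      intro r y
      refine le_csInf (hTne y) ?_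
      rintro t ⟨x, hx, rfl⟩
      refine le_trans ?_ (A.nu_smul r x)
      have := keynu (r • x)
      rwa [map_smul, hx] at this
  · intro r
    constructor
    · -- barmu
      apply le_ciInf
      intro m'
      obtain ⟨x, hx⟩ := hf m'
      have h1 : barmu A.mu r ≤ A.mu (r • x) :=
        ciInf_le ⟨0, by rintro t ⟨m, rfl⟩; simpa using A.mu_nonneg _⟩ x
      refine le_trans h1 ?_
      have := keymu (r • x)
      rwa [map_smul, hx] at this
    · -- barnu
      apply ciSup_le
      intro m'
      obtain ⟨x, hx⟩ := hf m'
      have hbdd : BddAbove (Set.range fun m : M => A.nu (r • m)) :=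
        ⟨1, by rintro t ⟨m, rfl⟩; exact A.nu_le_one _⟩
      have h1 : A.nu (r • x) ≤ barnu A.nu r := le_ciSup hbdd x
      refine le_trans ?_ h1
      have := keynu (r • x)
      rwa [map_smul, hx] at this
end

section
/- Let A be a submodule of an R-module M. The intuitionistic fuzzy characteristic function χ_A is an intuitionistic fuzzy primary submodule of M if and only if A is a primary submodule of M (i.e., rm ∈ A implies m ∈ A or rⁿM ⊆ A for some n). -/
open scoped Classical

/-- `χ_A` is intuitionistic fuzzy primary iff `A` is a primary
submodule of `M`. -/
theorem stmt14 {R M : Type*} [CommRing R] [AddCommGroup M] [Module R M]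
    (N : Submodule R M) :
    IsIFPrimary R (chimu (N : Set M)) (chinu (N : Set M)) ↔
      ∀ (r : R) (m : M), r • m ∈ N →
        m ∈ N ∨ ∃ n : ℕ, ∀ x : M, r ^ (n + 1) • x ∈ N := by
  constructor
  · intro h r m hrm
    by_cases hm : m ∈ N
    · exact Or.inl hm
    · right
      rcases h r m with ⟨h1, _⟩ | ⟨_, h2⟩
      · exfalso
        simp [chimu, hrm, hm] at h1
      · by_contra hc
        push_neg at hc
        have hrad : (1:ℝ) ≤ radnu (chinu (N : Set M)) r := by
          apply le_ciInf
          intro n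
          obtain ⟨x, hx⟩ := hc n
          have hb : BddAbove (Set.range fun x : M => chinu (N : Set M) (r ^ (n+1) • x)) := by
            refine ⟨1, ?_⟩
            rintro t ⟨y, rfl⟩
            by_cases hy : r ^ (n+1) • y ∈ N <;> simp [chinu, hy]
          calc (1:ℝ) = chinu (N : Set M) (r ^ (n+1) • x) := by simp [chinu, hx]
            _ ≤ _ := le_ciSup hb x
        have hle := hrad.trans h2
        simp [chinu, hrm] at hle; linarith
  · intro h r m
    by_cases hrm : r • m ∈ N
    · by_cases hm : m ∈ N
      · left
        constructor <;> simp [chimu, chinu, hrm, hm]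
      · right
        obtain ⟨n, hn⟩ := (h r m hrm).resolve_left hm
        constructor
        · have hfn : (1:ℝ) ≤ ⨅ x : M, chimu (N : Set M) (r ^ (n+1) • x) := by
            apply le_ciInf; intro x; simp [chimu, hn x]
          have hb : BddAbove (Set.range fun k : ℕ => ⨅ x : M, chimu (N : Set M) (r ^ (k+1) • x)) := by
            refine ⟨1, ?_⟩
            rintro t ⟨k, rfl⟩
            have hbl : BddBelow (Set.range fun x : M => chimu (N : Set M) (r ^ (k+1) • x)) := by
              refine ⟨0, ?_⟩
              rintro t ⟨y, rfl⟩
              by_cases hy : r ^ (k+1) • y ∈ N <;> simp [chimu, hy]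
            calc (⨅ x : M, chimu (N : Set M) (r ^ (k+1) • x))
                ≤ chimu (N : Set M) (r ^ (k+1) • (0:M)) := ciInf_le hbl 0
              _ ≤ 1 := by by_cases hy : r ^ (k+1) • (0:M) ∈ N <;> simp [chimu, hy]
          calc chimu (N : Set M) (r • m) ≤ 1 := by by_cases hy : r • m ∈ N <;> simp [chimu, hy]
            _ ≤ ⨆ k : ℕ, ⨅ x : M, chimu (N : Set M) (r ^ (k+1) • x) :=
                hfn.trans (le_ciSup hb n)
            _ = radmu (chimu (N : Set M)) r := rfl
        · have hsup : (⨆ x : M, chinu (N : Set M) (r ^ (n+1) • x)) ≤ 0 := by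
            apply ciSup_le; intro x; simp [chinu, hn x]
          have hbb : BddBelow (Set.range fun k : ℕ => ⨆ x : M, chinu (N : Set M) (r ^ (k+1) • x)) := by
            refine ⟨0, ?_⟩
            rintro t ⟨k, rfl⟩
            have hba : BddAbove (Set.range fun x : M => chinu (N : Set M) (r ^ (k+1) • x)) := by
              refine ⟨1, ?_⟩
              rintro t ⟨y, rfl⟩
              by_cases hy : r ^ (k+1) • y ∈ N <;> simp [chinu, hy]
            calc (0:ℝ) ≤ chinu (N : Set M) (r ^ (k+1) • (0:M)) := by
                  by_cases hy : r ^ (k+1) • (0:M) ∈ N <;> simp [chinu, hy]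
              _ ≤ _ := le_ciSup hba 0
          calc radnu (chinu (N : Set M)) r
              ≤ ⨆ x : M, chinu (N : Set M) (r ^ (n+1) • x) := ciInf_le hbb n
            _ ≤ 0 := hsup
            _ ≤ chinu (N : Set M) (r • m) := by simp [chinu, hrm]
    · left
      have hm : m ∉ N := fun hm => hrm (N.smul_mem r hm)
      constructor <;> simp [chimu, chinu, hrm, hm]
end

section
/- Let A be an intuitionistic fuzzy primary submodule of an R-module M with the sup property. Then for α, β ∈ [0,1] with α+β ≤ 1, the cut M_A^{(α,β)} = {x ∈ M : μ_A(x) ≥ α, ν_A(x) ≤ β} is a primary submodule of M. -/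
open scoped Classical

/-- cuts of an intuitionistic fuzzy primary submodule with the sup
property are primary submodules. -/
theorem stmt15 {R M : Type*} [CommRing R] [AddCommGroup M] [Module R M]
    (A : IFSub R M) (hp : IsIFPrimary R A.mu A.nu) (hsup : SupProp A.mu A.nu)
    (α β : ℝ) (hα : 0 ≤ α) (hβ : 0 ≤ β) (hαβ : α + β ≤ 1) :
    ∃ N : Submodule R M,
      (N : Set M) = {x : M | α ≤ A.mu x ∧ A.nu x ≤ β} ∧
      ∀ (r : R) (m : M), r • m ∈ N →
        m ∈ N ∨ ∃ n : ℕ, ∀ x : M, r ^ (n + 1) • x ∈ N := by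
  classical
  refine ⟨{ carrier := {x : M | α ≤ A.mu x ∧ A.nu x ≤ β}
            add_mem' := ?_
            zero_mem' := ?_
            smul_mem' := ?_ }, rfl, ?_⟩
  · rintro a b ⟨ha1, ha2⟩ ⟨hb1, hb2⟩
    exact ⟨le_trans (le_min ha1 hb1) (A.mu_add a b),
           le_trans (A.nu_add a b) (max_le ha2 hb2)⟩
  · exact ⟨by rw [A.mu_zero]; linarith, by rw [A.nu_zero]; exact hβ⟩
  · rintro c x ⟨h1, h2⟩
    exact ⟨le_trans h1 (A.mu_smul c x), le_trans (A.nu_smul c x) h2⟩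
  · intro r m hrm
    simp only [Submodule.mem_mk, AddSubmonoid.mem_mk, AddSubsemigroup.mem_mk,
      Set.mem_setOf_eq] at hrm ⊢
    rcases hp r m with ⟨he1, he2⟩ | ⟨h1, h2⟩
    · exact Or.inl ⟨he1 ▸ hrm.1, he2 ▸ hrm.2⟩
    · right
      have hαr : α ≤ radmu A.mu r := le_trans hrm.1 h1
      have hβr : radnu A.nu r ≤ β := le_trans h2 hrm.2
      by_contra hcon
      push_neg at hcon
      choose x hx using hcon
      set f : ℕ → M := fun n => r ^ (n + 1) • x n with hf
      obtain ⟨y₀, ⟨k, hk⟩, hmax, hmin⟩ := hsup (Set.range f) ⟨f 0, 0, rfl⟩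
      rcases lt_or_ge (A.mu (f k)) α with hmu | hge
      · -- A.mu (f k) < α
        have hrad : radmu A.mu r ≤ A.mu y₀ := by
          refine ciSup_le fun n => le_trans ?_ (hmax (f n) ⟨n, rfl⟩)
          exact ciInf_le ⟨0, by rintro t ⟨m', rfl⟩; exact A.mu_nonneg _⟩ (x n)
        rw [← hk] at hrad
        linarith
      · -- β < A.nu (f k)
        have hnu := hx k hge
        have hrad : A.nu y₀ ≤ radnu A.nu r := by
          refine le_ciInf fun n => le_trans (hmin (f n) ⟨n, rfl⟩) ?_
          exact le_ciSup (f := fun m' => A.nu (r ^ (n + 1) • m')) ⟨1, by rintro t ⟨m', rfl⟩; exact A.nu_le_one _⟩ (x n)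
        rw [← hk] at hrad
        linarith
end

section
/- Let A be an intuitionistic fuzzy submodule of an R-module M such that every (α,β)-cut M_A^{(α,β)} = {x ∈ M : μ_A(x) ≥ α, ν_A(x) ≤ β} (with α+β ≤ 1) is a primary submodule of M. Then A is an intuitionistic fuzzy primary submodule of M. -/
open scoped Classical

/-- if every `(α,β)`-cut of `A` is a primary submodule, then `A`
is an intuitionistic fuzzy primary submodule. -/
theorem stmt16 {R M : Type*} [CommRing R] [AddCommGroup M] [Module R M]
    (A : IFSub R M)
    (h : ∀ α β : ℝ, 0 ≤ α → 0 ≤ β → α + β ≤ 1 →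
      ∀ (r : R) (m : M), (α ≤ A.mu (r • m) ∧ A.nu (r • m) ≤ β) →
        (α ≤ A.mu m ∧ A.nu m ≤ β) ∨
        ∃ n : ℕ, ∀ x : M,
          α ≤ A.mu (r ^ (n + 1) • x) ∧ A.nu (r ^ (n + 1) • x) ≤ β) :
    IsIFPrimary R A.mu A.nu := by
  intro r m
  rcases h (A.mu (r • m)) (A.nu (r • m)) (A.mu_nonneg _) (A.nu_nonneg _)
      (A.sum_le_one _) r m ⟨le_rfl, le_rfl⟩ with ⟨h1, h2⟩ | ⟨n, hn⟩
  · exact Or.inl ⟨le_antisymm h1 (A.mu_smul r m), le_antisymm (A.nu_smul r m) h2⟩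
  · right
    unfold radmu radnu
    constructor
    · have h1 : A.mu (r • m) ≤ ⨅ x : M, A.mu (r ^ (n + 1) • x) :=
        le_ciInf fun x => (hn x).1
      refine h1.trans (le_ciSup (f := fun k : ℕ => ⨅ x : M, A.mu (r ^ (k + 1) • x)) ?_ n)
      refine ⟨1, ?_⟩
      rintro t ⟨k, rfl⟩
      exact (ciInf_le ⟨0, fun t ⟨x, hx⟩ => hx ▸ A.mu_nonneg _⟩ (0 : M)).trans (A.mu_le_one _)
    · have h2 : (⨆ x : M, A.nu (r ^ (n + 1) • x)) ≤ A.nu (r • m) :=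
        ciSup_le fun x => (hn x).2
      refine (ciInf_le (f := fun k : ℕ => ⨆ x : M, A.nu (r ^ (k + 1) • x)) ?_ n).trans h2
      refine ⟨0, ?_⟩
      rintro t ⟨k, rfl⟩
      exact le_ciSup_of_le ⟨1, fun t ⟨x, hx⟩ => hx ▸ A.nu_le_one _⟩ (0 : M) (A.nu_nonneg _)
end

section
/- Let A be an intuitionistic fuzzy primary submodule of an R-module M. Then the support A* = {x ∈ M : μ_A(x) > 0 and ν_A(x) < 1} is a primary submodule of M. -/
open scoped Classical

/-- the support of an intuitionistic fuzzy primary submodule is a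
primary submodule. -/
theorem stmt17 {R M : Type*} [CommRing R] [AddCommGroup M] [Module R M]
    (A : IFSub R M) (hp : IsIFPrimary R A.mu A.nu) :
    ∃ N : Submodule R M,
      (N : Set M) = {x : M | 0 < A.mu x ∧ A.nu x < 1} ∧
      ∀ (r : R) (m : M), r • m ∈ N →
        m ∈ N ∨ ∃ n : ℕ, ∀ x : M, r ^ (n + 1) • x ∈ N := by
  refine ⟨{ carrier := {x : M | 0 < A.mu x ∧ A.nu x < 1}
            add_mem' := ?_
            zero_mem' := ?_
            smul_mem' := ?_ }, rfl, ?_⟩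
  · rintro a b ⟨ha1, ha2⟩ ⟨hb1, hb2⟩
    exact ⟨lt_of_lt_of_le (lt_min ha1 hb1) (A.mu_add a b),
      lt_of_le_of_lt (A.nu_add a b) (max_lt ha2 hb2)⟩
  · exact ⟨by rw [A.mu_zero]; norm_num, by rw [A.nu_zero]; norm_num⟩
  · rintro c x ⟨h1, h2⟩
    exact ⟨lt_of_lt_of_le h1 (A.mu_smul c x), lt_of_le_of_lt (A.nu_smul c x) h2⟩
  · rintro r m ⟨h1, h2⟩
    rcases hp r m with ⟨e1, e2⟩ | ⟨l1, l2⟩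
    · exact Or.inl ⟨e1 ▸ h1, e2 ▸ h2⟩
    · right
      have hradmu : 0 < radmu A.mu r := lt_of_lt_of_le h1 l1
      have hradnu : radnu A.nu r < 1 := lt_of_le_of_lt l2 h2
      have hbddmu : ∀ n : ℕ, BddBelow (Set.range fun m : M => A.mu (r ^ (n + 1) • m)) :=
        fun n => ⟨0, by rintro _ ⟨m, rfl⟩; exact A.mu_nonneg _⟩
      have hbddnu : ∀ n : ℕ, BddAbove (Set.range fun m : M => A.nu (r ^ (n + 1) • m)) :=
        fun n => ⟨1, by rintro _ ⟨m, rfl⟩; exact A.nu_le_one _⟩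
      -- find n₁ with infimum > 0
      obtain ⟨n₁, hn₁⟩ : ∃ n : ℕ, 0 < ⨅ m : M, A.mu (r ^ (n + 1) • m) := by
        have hb : BddAbove (Set.range fun n : ℕ => ⨅ m : M, A.mu (r ^ (n + 1) • m)) := by
          refine ⟨1, ?_⟩
          rintro _ ⟨n, rfl⟩
          exact le_trans (ciInf_le (hbddmu n) 0) (A.mu_le_one _)
        exact (lt_ciSup_iff hb).mp hradmu
      obtain ⟨n₂, hn₂⟩ : ∃ n : ℕ, (⨆ m : M, A.nu (r ^ (n + 1) • m)) < 1 := by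
        have hb : BddBelow (Set.range fun n : ℕ => ⨆ m : M, A.nu (r ^ (n + 1) • m)) := by
          refine ⟨0, ?_⟩
          rintro _ ⟨n, rfl⟩
          exact le_trans (A.nu_nonneg _) (le_ciSup (hbddnu n) 0)
        exact (ciInf_lt_iff hb).mp hradnu
      refine ⟨max n₁ n₂, fun x => ?_⟩
      have key : ∀ (k n : ℕ) (x : M), n ≤ k →
          A.mu (r ^ (n + 1) • x) ≤ A.mu (r ^ (k + 1) • x) ∧
          A.nu (r ^ (k + 1) • x) ≤ A.nu (r ^ (n + 1) • x) := by
        intro k n x hnk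
        have : r ^ (k + 1) • x = r ^ (k - n) • (r ^ (n + 1) • x) := by
          rw [smul_smul, ← pow_add]
          congr 1
          congr 1
          omega
        rw [this]
        exact ⟨A.mu_smul _ _, A.nu_smul _ _⟩
      constructor
      · exact lt_of_lt_of_le (lt_of_lt_of_le hn₁ (ciInf_le (hbddmu n₁) x))
          (key (max n₁ n₂) n₁ x (le_max_left _ _)).1
      · exact lt_of_le_of_lt (le_trans (key (max n₁ n₂) n₂ x (le_max_right _ _)).2
          (le_ciSup (hbddnu n₂) x)) hn₂
end

section
/- Let A be an intuitionistic fuzzy ideal of a commutative ring R with the sup property. Then A (viewed as an intuitionistic fuzzy submodule of the R-module R) is intuitionistic fuzzy primary if and only if A is an intuitionistic fuzzy weakly primary ideal, i.e., for all x, y ∈ R either (μ_A(xy) = μ_A(x) and ν_A(xy) = ν_A(x)) or (μ_A(xy) ≤ μ_A(yⁿ) and ν_A(xy) ≥ ν_A(yⁿ)) for some n ∈ ℕ. -/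
open scoped Classical

/-- an intuitionistic fuzzy ideal with the sup property is
intuitionistic fuzzy primary (as a submodule of `R`) iff it is an
intuitionistic fuzzy weakly primary ideal. -/
theorem stmt18 {R : Type*} [CommRing R]
    (A : IFIdealS R) (hsup : SupProp A.mu A.nu) :
    (∀ r x : R,
      (A.mu (r * x) = A.mu x ∧ A.nu (r * x) = A.nu x) ∨
      (A.mu (r * x) ≤ (⨆ n : ℕ, A.mu (r ^ (n + 1))) ∧
        (⨅ n : ℕ, A.nu (r ^ (n + 1))) ≤ A.nu (r * x))) ↔
    (∀ x y : R,
      (A.mu (x * y) = A.mu x ∧ A.nu (x * y) = A.nu x) ∨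
      ∃ n : ℕ, A.mu (x * y) ≤ A.mu (y ^ (n + 1)) ∧
        A.nu (y ^ (n + 1)) ≤ A.nu (x * y)) := by
  constructor
  · intro h x y
    rcases h y x with ⟨h1, h2⟩ | ⟨h1, h2⟩
    · left
      rw [mul_comm] at h1 h2
      exact ⟨h1, h2⟩
    · right
      obtain ⟨y₀, ⟨n₀, rfl⟩, hmu, hnu⟩ :=
        hsup (Set.range fun n : ℕ => y ^ (n + 1)) ⟨y, 0, by simp⟩
      refine ⟨n₀, ?_, ?_⟩
      · rw [mul_comm x y]
        exact h1.trans (ciSup_le fun n => hmu _ ⟨n, rfl⟩)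
      · rw [mul_comm x y]
        exact (le_ciInf fun n => hnu _ ⟨n, rfl⟩).trans h2
  · intro h r x
    rcases h x r with ⟨h1, h2⟩ | ⟨n, h1, h2⟩
    · left
      rw [mul_comm] at h1 h2
      exact ⟨h1, h2⟩
    · right
      rw [mul_comm] at h1 h2
      constructor
      · exact h1.trans (le_ciSup (f := fun n : ℕ => A.mu (r ^ (n + 1))) ⟨1, by rintro t ⟨n, rfl⟩; exact A.mu_le_one (r ^ (n + 1))⟩ n)
      · exact (ciInf_le (f := fun n : ℕ => A.nu (r ^ (n + 1))) ⟨0, by rintro t ⟨n, rfl⟩; exact A.nu_nonneg (r ^ (n + 1))⟩ n).trans h2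
end

section
/- Let f : M → M' be an R-module homomorphism and B an intuitionistic fuzzy primary submodule of M'. Then the preimage f⁻¹(B) = (μ_B ∘ f, ν_B ∘ f) is an intuitionistic fuzzy primary submodule of M. -/
open scoped Classical

/-- the preimage of an intuitionistic fuzzy primary submodule
under a module homomorphism is intuitionistic fuzzy primary. -/
theorem stmt19 {R M M' : Type*} [CommRing R] [AddCommGroup M] [Module R M]
    [AddCommGroup M'] [Module R M']
    (f : M →ₗ[R] M') (B : IFSub R M') (hB : IsIFPrimary R B.mu B.nu) :
    IsIFPrimary R (fun x : M => B.mu (f x)) (fun x : M => B.nu (f x)) := by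
  intro r m
  rcases hB r (f m) with h | h
  · left
    simpa [map_smul] using h
  · right
    constructor
    · have h1 : radmu B.mu r ≤ radmu (fun x : M => B.mu (f x)) r := by
        apply ciSup_mono
        · exact ⟨1, by rintro t ⟨n, rfl⟩; exact ciInf_le_of_le ⟨0, fun t ⟨x, hx⟩ => hx ▸ B.mu_nonneg _⟩ 0 (B.mu_le_one _)⟩
        · intro n
          apply le_ciInf
          intro x
          show (⨅ m : M', B.mu (r ^ (n + 1) • m)) ≤ B.mu (f (r ^ (n + 1) • x))
          rw [map_smul]
          exact ciInf_le ⟨0, fun t ⟨x, hx⟩ => hx ▸ B.mu_nonneg _⟩ (f x)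
      calc B.mu (f (r • m)) = B.mu (r • f m) := by rw [map_smul]
        _ ≤ radmu B.mu r := h.1
        _ ≤ _ := h1
    · have h1 : radnu (fun x : M => B.nu (f x)) r ≤ radnu B.nu r := by
        apply ciInf_mono
        · exact ⟨0, by rintro t ⟨n, rfl⟩; exact le_ciSup_of_le ⟨1, fun t ⟨x, hx⟩ => hx ▸ B.nu_le_one _⟩ 0 (B.nu_nonneg _)⟩
        · intro n
          apply ciSup_le
          intro x
          show B.nu (f (r ^ (n + 1) • x)) ≤ ⨆ m : M', B.nu (r ^ (n + 1) • m)
          rw [map_smul]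
          exact le_ciSup (f := fun m' : M' => B.nu (r ^ (n + 1) • m'))
            ⟨1, fun t ⟨x, hx⟩ => hx ▸ B.nu_le_one _⟩ (f x)
      calc radnu (fun x : M => B.nu (f x)) r ≤ radnu B.nu r := h1
        _ ≤ B.nu (r • f m) := h.2
        _ = B.nu (f (r • m)) := by rw [map_smul]
end
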